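/- Let a, b ∈ [0,1), let û, v̂ ∈ ℝ³ be Euclidean unit vectors, and set f(a,b) = (a² − b²)² − 8(a² + b² − 2). Then f(a,b) > 0, and the points x, y ∈ ℝ⁴ defined by x⃗ = 4a û/√f(a,b), x₀ = √(1 + ‖x⃗‖²), y⃗ = 4b v̂/√f(a,b), y₀ = √(1 + ‖y⃗‖²) lie on the hyperboloid H³ and satisfy Φ(x,y) = (a û, b v̂). -/

import Mathlib

/-!
Write `s = √f(a,b)`. The identity `(4 + a² − b²)² − (4a)² = f(a,b)` gives `x₀ = (4 + a² − b²)/s`,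
and symmetrically `y₀ = (4 + b² − a²)/s`, so `x₀ + y₀ = 8/s` and the factor `2/(x₀ + y₀) = s/4`
of the Pogorelov map exactly undoes the scalings `4a/s` and `4b/s`.
-/

noncomputable section

/-- Minkowski inner product on ℝ⁴: ⟨x,y⟩ = −x₀y₀ + x₁y₁ + x₂y₂ + x₃y₃. -/
def mink (x y : Fin 4 → ℝ) : ℝ :=
  -(x 0 * y 0) + x 1 * y 1 + x 2 * y 2 + x 3 * y 3

/-- The hyperboloid model of hyperbolic 3-space. -/
def Hyp : Set (Fin 4 → ℝ) := {x | 0 < x 0 ∧ mink x x = -1}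

/-- Spatial part x⃗ of x = (x₀, x⃗). -/
def spat (x : Fin 4 → ℝ) : Fin 3 → ℝ := fun i => x i.succ

/-- The Pogorelov map Φ(x,y) = (2x⃗/(x₀+y₀), 2y⃗/(x₀+y₀)). -/
def pog (x y : Fin 4 → ℝ) : (Fin 3 → ℝ) × (Fin 3 → ℝ) :=
  ((2 / (x 0 + y 0)) • spat x, (2 / (x 0 + y 0)) • spat y)

/-- Euclidean norm on ℝ³. -/
def enorm3 (a : Fin 3 → ℝ) : ℝ := Real.sqrt (a 0 ^ 2 + a 1 ^ 2 + a 2 ^ 2)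

/-- f(a,b) = (a² − b²)² − 8(a² + b² − 2). -/
def fab (a b : ℝ) : ℝ := (a ^ 2 - b ^ 2) ^ 2 - 8 * (a ^ 2 + b ^ 2 - 2)

lemma fab_pos {a b : ℝ} (h : a ^ 2 + b ^ 2 < 2) : 0 < fab a b := by
  unfold fab
  nlinarith [sq_nonneg (a ^ 2 - b ^ 2)]

lemma fab_eq_sq_sub_sq (a b : ℝ) : fab a b = (4 + a ^ 2 - b ^ 2) ^ 2 - (4 * a) ^ 2 := by
  unfold fab
  ring

lemma fab_comm (a b : ℝ) : fab a b = fab b a := by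
  unfold fab
  ring

lemma enorm3_smul (c : ℝ) (w : Fin 3 → ℝ) : enorm3 (c • w) = |c| * enorm3 w := by
  simp only [enorm3, Pi.smul_apply, smul_eq_mul, mul_pow, ← mul_add]
  rw [Real.sqrt_mul (sq_nonneg c), Real.sqrt_sq_eq_abs]

lemma spat_cons (t : ℝ) (w : Fin 3 → ℝ) : spat (Fin.cons t w) = w := rfl

lemma cons_sqrt_mem_Hyp (w : Fin 3 → ℝ) :
    (Fin.cons (Real.sqrt (1 + enorm3 w ^ 2)) w : Fin 4 → ℝ) ∈ Hyp := by
  have hw : enorm3 w ^ 2 = w 0 ^ 2 + w 1 ^ 2 + w 2 ^ 2 := Real.sq_sqrt (by positivity)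
  refine ⟨Real.sqrt_pos.mpr (by positivity), ?_⟩
  change -(Real.sqrt (1 + enorm3 w ^ 2) * Real.sqrt (1 + enorm3 w ^ 2))
    + w 0 * w 0 + w 1 * w 1 + w 2 * w 2 = -1
  rw [Real.mul_self_sqrt (by positivity), hw]
  ring

lemma sqrt_one_add_div_sq {p q s : ℝ} (hs : 0 < s) (hp : 0 ≤ p) (h : p ^ 2 - q ^ 2 = s ^ 2) :
    Real.sqrt (1 + (q / s) ^ 2) = p / s := by
  rw [← Real.sqrt_sq (div_nonneg hp hs.le)]
  congr 1
  field_simp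
  linarith

/-- For a, b ∈ [0,1) and unit vectors û, v̂, f(a,b) > 0 and the explicitly
constructed points x, y lie on H³ and satisfy Φ(x,y) = (a û, b v̂). -/
theorem explicit_preimage (a b : ℝ) (ha0 : 0 ≤ a) (ha1 : a < 1)
    (hb0 : 0 ≤ b) (hb1 : b < 1) (u v : Fin 3 → ℝ)
    (hu : enorm3 u = 1) (hv : enorm3 v = 1) :
    0 < fab a b ∧
    (let xv : Fin 3 → ℝ := (4 * a / Real.sqrt (fab a b)) • u
     let yv : Fin 3 → ℝ := (4 * b / Real.sqrt (fab a b)) • v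
     let x : Fin 4 → ℝ := Fin.cons (Real.sqrt (1 + enorm3 xv ^ 2)) xv
     let y : Fin 4 → ℝ := Fin.cons (Real.sqrt (1 + enorm3 yv ^ 2)) yv
     x ∈ Hyp ∧ y ∈ Hyp ∧ pog x y = (a • u, b • v)) := by
  have ha2 : a ^ 2 < 1 := by nlinarith
  have hb2 : b ^ 2 < 1 := by nlinarith
  have hf : 0 < fab a b := fab_pos (by linarith)
  refine ⟨hf, ?_⟩
  intro xv yv x y
  have hs : 0 < Real.sqrt (fab a b) := Real.sqrt_pos.mpr hf
  have hs2 : Real.sqrt (fab a b) ^ 2 = fab a b := Real.sq_sqrt hf.le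
  have hx0 : x 0 = (4 + a ^ 2 - b ^ 2) / Real.sqrt (fab a b) := by
    change Real.sqrt (1 + enorm3 xv ^ 2) = _
    rw [enorm3_smul, hu, mul_one, sq_abs]
    exact sqrt_one_add_div_sq hs (by nlinarith) (by rw [hs2, fab_eq_sq_sub_sq])
  have hy0 : y 0 = (4 + b ^ 2 - a ^ 2) / Real.sqrt (fab a b) := by
    change Real.sqrt (1 + enorm3 yv ^ 2) = _
    rw [enorm3_smul, hv, mul_one, sq_abs]
    exact sqrt_one_add_div_sq hs (by nlinarith) (by rw [hs2, fab_comm, fab_eq_sq_sub_sq])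
  have hscale : 2 / (x 0 + y 0) = Real.sqrt (fab a b) / 4 := by
    rw [hx0, hy0]
    field_simp
    ring
  refine ⟨cons_sqrt_mem_Hyp xv, cons_sqrt_mem_Hyp yv, ?_⟩
  simp only [pog, x, y, spat_cons, hscale, xv, yv, smul_smul]
  congr 2 <;> field_simp
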